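/- Let A be a k-linear triangulated category of finite type and B ⊆ A a full triangulated subcategory that is saturated. Then B is right admissible in A: the inclusion B → A admits a right adjoint. -/

import Mathlib

/-!
STATEMENT 18: If `A` is a `k`-linear triangulated category of finite type and `B ⊆ A`
is a full triangulated subcategory (realized by a fully faithful triangulated functor
`j : B ⥤ A`) which is saturated, then `B` is right admissible in `A`: `j` admits a
right adjoint.
-/

open CategoryTheory CategoryTheory.Pretriangulated Opposite

universe v u u'

variable (k : Type v) [Field k]

section Defs

variable (D : Type u') [Category.{v} D] [Preadditive D] [Linear k D]
  [Limits.HasZeroObject D] [HasShift D ℤ] [∀ n : ℤ, (shiftFunctor D n).Additive]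
  [Pretriangulated D]

/-- A contravariant functor to `k`-vector spaces is cohomological if it sends
distinguished triangles to exact sequences. -/
def IsCohomological (F : Dᵒᵖ ⥤ ModuleCat.{v} k) : Prop :=
  ∀ T ∈ distTriang D, Function.Exact (F.map T.mor₂.op) (F.map T.mor₁.op)

/-- A functor is of finite type if `∑ₚ dim F(a⟦p⟧) < ∞` for every object `a`. -/
def FunctorFiniteType (F : Dᵒᵖ ⥤ ModuleCat.{v} k) : Prop :=
  ∀ a : D, {p : ℤ | Nontrivial (F.obj (op (a⟦p⟧)))}.Finite ∧
    ∀ p : ℤ, FiniteDimensional k (F.obj (op (a⟦p⟧)))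

/-- A functor `F : Dᵒᵖ ⥤ k-Vect` is representable if there is `b` with natural
`k`-linear isomorphisms `F(a) ≅ Hom(a, b)`. -/
def FunctorRepresentable (F : Dᵒᵖ ⥤ ModuleCat.{v} k) : Prop :=
  ∃ (b : D) (e : ∀ a : D, F.obj (op a) ≃ₗ[k] (a ⟶ b)),
    ∀ (a a' : D) (u : a' ⟶ a) (x : F.obj (op a)), e a' (F.map u.op x) = u ≫ e a x

/-- `D` is saturated: every cohomological functor of finite type is representable. -/
def SaturatedCat : Prop :=
  ∀ F : Dᵒᵖ ⥤ ModuleCat.{v} k, F.Additive → IsCohomological k D F →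
    FunctorFiniteType k D F → FunctorRepresentable k D F

end Defs

/-!
The right adjoint is built objectwise: for `a : A` the functor `b ↦ Hom_A(j b, a)` on `B` is
cohomological, because `j` is triangulated and `Hom_A(-, a)` is, and of finite type, because `j`
commutes with shifts and `A` is of finite type. Saturation of `B` represents it by some `R a`,
and naturality of these representations in `b` is exactly what assembles `R` into a right
adjoint of `j`.
-/

section RightAdjoint

variable {A : Type u} [Category.{v} A] {B : Type u'} [Category.{v} B]

section Cohomological

variable [Preadditive A] [Limits.HasZeroObject A] [HasShift A ℤ]
  [∀ n : ℤ, (shiftFunctor A n).Additive] [Pretriangulated A]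
  [Preadditive B] [Limits.HasZeroObject B] [HasShift B ℤ]
  [∀ n : ℤ, (shiftFunctor B n).Additive] [Pretriangulated B]

lemma isCohomological_linearYoneda [Linear k A] (a : A) :
    IsCohomological k A ((linearYoneda k A).obj a) := by
  intro T hT g
  constructor
  · intro hg
    obtain ⟨h, rfl⟩ := Triangle.yoneda_exact₂ T hT g hg
    exact ⟨h, rfl⟩
  · rintro ⟨h, rfl⟩
    exact (comp_distTriang_mor_zero₁₂_assoc T hT h).trans Limits.zero_comp

lemma IsCohomological.comp_op {F : Aᵒᵖ ⥤ ModuleCat.{v} k} (hF : IsCohomological k A F)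
    (j : B ⥤ A) [j.CommShift ℤ] [j.IsTriangulated] : IsCohomological k B (j.op ⋙ F) :=
  fun T hT => hF _ (j.map_distinguished T hT)

end Cohomological

section FiniteType

variable [HasShift A ℤ] [HasShift B ℤ]

lemma functorFiniteType_linearYoneda [Preadditive A] [Linear k A]
    (hft : ∀ a b : A, {p : ℤ | Nontrivial (a ⟶ b⟦p⟧)}.Finite ∧
      ∀ p : ℤ, FiniteDimensional k (a ⟶ b⟦p⟧)) (a : A) :
    FunctorFiniteType k A ((linearYoneda k A).obj a) := by
  intro x
  constructor
  · refine ((hft x a).1.preimage neg_injective.injOn).subset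
      fun p (hp : Nontrivial (x⟦p⟧ ⟶ a)) => ?_
    exact ((shiftEquiv A p).toAdjunction.homEquiv x a).nontrivial_congr.mp hp
  · intro p
    have := (hft (x⟦p⟧) a).2 0
    exact Module.Finite.equiv (Linear.homCongr k (Iso.refl _) ((shiftFunctorZero A ℤ).app a))

lemma FunctorFiniteType.comp_op {F : Aᵒᵖ ⥤ ModuleCat.{v} k} (hF : FunctorFiniteType k A F)
    (j : B ⥤ A) [j.CommShift ℤ] : FunctorFiniteType k B (j.op ⋙ F) := by
  intro b
  let e (p : ℤ) : F.obj (op ((j.obj b)⟦p⟧)) ≃ₗ[k] F.obj (op (j.obj (b⟦p⟧))) :=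
    (F.mapIso ((j.commShiftIso p).app b).op).toLinearEquiv
  refine ⟨(hF (j.obj b)).1.subset fun p hp => ?_, fun p => ?_⟩
  · exact (e p).toEquiv.nontrivial_congr.mpr hp
  · have := (hF (j.obj b)).2 p
    exact Module.Finite.equiv (e p)

end FiniteType

lemma exists_rightAdjoint_of_functorRepresentable [Preadditive A] [Linear k A]
    [Preadditive B] [Linear k B] (j : B ⥤ A)
    (hrep : ∀ a : A, FunctorRepresentable k B (j.op ⋙ (linearYoneda k A).obj a)) :
    ∃ R : A ⥤ B, Nonempty (j ⊣ R) := by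
  choose R e he using hrep
  exact ⟨Adjunction.rightAdjointOfEquiv (fun b a => (e a b).toEquiv)
      fun b' b a u x => he a b b' u x,
    ⟨Adjunction.adjunctionOfEquivRight _ _⟩⟩

end RightAdjoint

theorem saturated_implies_right_admissible
    {A : Type u} [Category.{v} A] [Preadditive A] [Linear k A]
    [Limits.HasZeroObject A] [HasShift A ℤ] [∀ n : ℤ, (shiftFunctor A n).Additive]
    [Pretriangulated A]
    -- `A` is of finite type
    (hft : ∀ a b : A, {p : ℤ | Nontrivial (a ⟶ b⟦p⟧)}.Finite ∧
      ∀ p : ℤ, FiniteDimensional k (a ⟶ b⟦p⟧))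
    {B : Type u'} [Category.{v} B] [Preadditive B] [Linear k B]
    [Limits.HasZeroObject B] [HasShift B ℤ] [∀ n : ℤ, (shiftFunctor B n).Additive]
    [Pretriangulated B]
    (j : B ⥤ A) [j.Full] [j.Faithful] [j.Additive] [j.Linear k]
    [j.CommShift ℤ] [j.IsTriangulated]
    (hsat : SaturatedCat k B) :
    ∃ R : A ⥤ B, Nonempty (j ⊣ R) :=
  exists_rightAdjoint_of_functorRepresentable k j fun a =>
    hsat _ inferInstance ((isCohomological_linearYoneda k a).comp_op k j)
      ((functorFiniteType_linearYoneda k hft a).comp_op k j)
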